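/- Let I ⊆ ℝ be an interval, g ∈ ℝ, and let h, u, α₁, α₂ : I → ℝ be differentiable with h(x) > 0 on I and (h u)′ = 0 on I. Then for each i ∈ {1, 2} and every x ∈ I one has (2 h u α_i)′(x) − u(x) · (h α_i)′(x) = u(x) · h(x)^2 · (α_i/h)′(x); consequently, if (2 h u α_i)′ = u (h α_i)′ on I, then at each x ∈ I either u(x) = 0 or (α_i/h)′(x) = 0. -/

import Mathlib

section

variable {𝕜 : Type*} [NontriviallyNormedField 𝕜] {h u α : 𝕜 → 𝕜} {x : 𝕜}

theorem deriv_two_mul_mul_mul_sub_mul_deriv_mul (hh : DifferentiableAt 𝕜 h x)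
    (hu : DifferentiableAt 𝕜 u x) (hα : DifferentiableAt 𝕜 α x) (hne : h x ≠ 0)
    (hq : deriv (fun y => h y * u y) x = 0) :
    deriv (fun y => 2 * h y * u y * α y) x - u x * deriv (fun y => h y * α y) x
      = u x * h x ^ 2 * deriv (fun y => α y / h y) x := by
  have hdischarge : deriv h x * u x + h x * deriv u x = 0 := by rwa [← deriv_mul hh hu]
  have hflux : HasDerivAt (fun y => 2 * h y * u y * α y) _ x :=
    ((hh.hasDerivAt.const_mul 2).mul hu.hasDerivAt).mul hα.hasDerivAt
  rw [hflux.deriv, deriv_fun_mul hh hα, deriv_fun_div hα hh hne, Pi.mul_apply]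
  -- the `(h u)'`-terms cancel, leaving `h u α' - u h' α`, which is `u h² (α/h)'`
  field_simp
  linear_combination 2 * α x * hdischarge

theorem eq_zero_or_deriv_div_eq_zero_of_deriv_two_mul_mul_mul_eq (hh : DifferentiableAt 𝕜 h x)
    (hu : DifferentiableAt 𝕜 u x) (hα : DifferentiableAt 𝕜 α x) (hne : h x ≠ 0)
    (hq : deriv (fun y => h y * u y) x = 0)
    (hsteady : deriv (fun y => 2 * h y * u y * α y) x = u x * deriv (fun y => h y * α y) x) :
    u x = 0 ∨ deriv (fun y => α y / h y) x = 0 := by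
  have hdefect := deriv_two_mul_mul_mul_sub_mul_deriv_mul hh hu hα hne hq
  rw [hsteady, sub_self, eq_comm, mul_eq_zero, mul_eq_zero] at hdefect
  simpa [hne] using hdefect

end

theorem swlme2_moment_identities_general
    (I : Set ℝ) (h u α₁ α₂ : ℝ → ℝ)
    (hh : ∀ x ∈ I, DifferentiableAt ℝ h x)
    (hu : ∀ x ∈ I, DifferentiableAt ℝ u x)
    (hα₁ : ∀ x ∈ I, DifferentiableAt ℝ α₁ x)
    (hα₂ : ∀ x ∈ I, DifferentiableAt ℝ α₂ x)
    (hpos : ∀ x ∈ I, 0 < h x)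
    (hq : ∀ x ∈ I, deriv (fun y => h y * u y) x = 0) :
    (∀ x ∈ I,
      deriv (fun y => 2 * h y * u y * α₁ y) x - u x * deriv (fun y => h y * α₁ y) x
        = u x * h x ^ 2 * deriv (fun y => α₁ y / h y) x) ∧
    (∀ x ∈ I,
      deriv (fun y => 2 * h y * u y * α₂ y) x - u x * deriv (fun y => h y * α₂ y) x
        = u x * h x ^ 2 * deriv (fun y => α₂ y / h y) x) ∧
    ((∀ x ∈ I, deriv (fun y => 2 * h y * u y * α₁ y) x
        = u x * deriv (fun y => h y * α₁ y) x) →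
      ∀ x ∈ I, u x = 0 ∨ deriv (fun y => α₁ y / h y) x = 0) ∧
    ((∀ x ∈ I, deriv (fun y => 2 * h y * u y * α₂ y) x
        = u x * deriv (fun y => h y * α₂ y) x) →
      ∀ x ∈ I, u x = 0 ∨ deriv (fun y => α₂ y / h y) x = 0) :=
  ⟨fun x hx => deriv_two_mul_mul_mul_sub_mul_deriv_mul (hh x hx) (hu x hx) (hα₁ x hx)
      (hpos x hx).ne' (hq x hx),
    fun x hx => deriv_two_mul_mul_mul_sub_mul_deriv_mul (hh x hx) (hu x hx) (hα₂ x hx)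
      (hpos x hx).ne' (hq x hx),
    fun hsteady x hx => eq_zero_or_deriv_div_eq_zero_of_deriv_two_mul_mul_mul_eq (hh x hx)
      (hu x hx) (hα₁ x hx) (hpos x hx).ne' (hq x hx) (hsteady x hx),
    fun hsteady x hx => eq_zero_or_deriv_div_eq_zero_of_deriv_two_mul_mul_mul_eq (hh x hx)
      (hu x hx) (hα₂ x hx) (hpos x hx).ne' (hq x hx) (hsteady x hx)⟩

/-- SWLME2 moment identities: with `h > 0` and constant discharge `(h u)' = 0`,
for each `i ∈ {1,2}` one has
`(2 h u αᵢ)'(x) - u(x) (h αᵢ)'(x) = u(x) h(x)² (αᵢ/h)'(x)`;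
consequently, if `(2 h u αᵢ)' = u (h αᵢ)'` on `I`, then at each point either
`u = 0` or `(αᵢ/h)' = 0`. -/
theorem swlme2_moment_identities
    (I : Set ℝ) (hI : I.OrdConnected) (g : ℝ) (h u α₁ α₂ : ℝ → ℝ)
    (hh : ∀ x ∈ I, DifferentiableAt ℝ h x)
    (hu : ∀ x ∈ I, DifferentiableAt ℝ u x)
    (hα₁ : ∀ x ∈ I, DifferentiableAt ℝ α₁ x)
    (hα₂ : ∀ x ∈ I, DifferentiableAt ℝ α₂ x)
    (hpos : ∀ x ∈ I, 0 < h x)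
    (hq : ∀ x ∈ I, deriv (fun y => h y * u y) x = 0) :
    (∀ x ∈ I,
      deriv (fun y => 2 * h y * u y * α₁ y) x - u x * deriv (fun y => h y * α₁ y) x
        = u x * h x ^ 2 * deriv (fun y => α₁ y / h y) x) ∧
    (∀ x ∈ I,
      deriv (fun y => 2 * h y * u y * α₂ y) x - u x * deriv (fun y => h y * α₂ y) x
        = u x * h x ^ 2 * deriv (fun y => α₂ y / h y) x) ∧
    ((∀ x ∈ I, deriv (fun y => 2 * h y * u y * α₁ y) x
        = u x * deriv (fun y => h y * α₁ y) x) →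
      ∀ x ∈ I, u x = 0 ∨ deriv (fun y => α₁ y / h y) x = 0) ∧
    ((∀ x ∈ I, deriv (fun y => 2 * h y * u y * α₂ y) x
        = u x * deriv (fun y => h y * α₂ y) x) →
      ∀ x ∈ I, u x = 0 ∨ deriv (fun y => α₂ y / h y) x = 0) :=
  swlme2_moment_identities_general I h u α₁ α₂ hh hu hα₁ hα₂ hpos hq
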